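/- Janson's second correlation inequality: let I be a finite set and let (ξ_i)_{i∈I} be independent random variables with values in {0,1} on a probability space. Let Ω be a finite family of nonempty subsets of I, and for ω ∈ Ω let E_ω be the event {ξ_i = 1 for all i ∈ ω}. Assume P(E_ω) ≤ 1/2 for every ω ∈ Ω. Then P(⋂_{ω∈Ω} E_ω^c) ≤ (∏_{ω∈Ω} P(E_ω^c)) · exp(2·Σ P(E_ω ∩ E_ω')), where the sum runs over all ordered pairs (ω, ω') of elements of Ω with ω ≠ ω' and ω ∩ ω' ≠ ∅. -/

import Mathlib

/-!
Write `E_ω = allOnes ξ ω` for the event that `ξ = 1` on `ω` and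
`C_S = avoidAllOnes ξ S = ⋂_{ω ∈ S} E_ωᶜ`, and induct on `S`.
To add `ω` to `S`, split `S` into the sets `J₁` meeting `ω` and `J₀` disjoint from it. The event
`E_ω` is independent of `C_{J₀}`, and by the Harris inequality (`E_ω ∩ E_ω'` is increasing,
`C_{J₀}` decreasing in `ξ`) `P(E_ω ∩ E_ω' ∩ C_{J₀}) ≤ P(E_ω ∩ E_ω') P(C_{J₀})`. A union bound
over `J₁` then gives `P(E_ω ∩ C_S) ≥ P(C_S) (P(E_ω) - δ)` with `δ = ∑_{ω' ∈ J₁} P(E_ω ∩ E_ω')`, so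
`P(C_{S ∪ {ω}}) ≤ P(C_S) (1 - P(E_ω) + δ) ≤ P(C_S) P(E_ωᶜ) exp(2δ)`, the last step because
`P(E_ω) ≤ 1/2`.
-/

open MeasureTheory ProbabilityTheory Finset

lemma prod_apply_inf_mul_prod_apply_sup {ι α M : Type*} [Fintype ι] [LinearOrder α]
    [CommMonoid M] (g : ι → α → M) (a b : ι → α) :
    (∏ i, g i ((a ⊓ b) i)) * ∏ i, g i ((a ⊔ b) i) = (∏ i, g i (a i)) * ∏ i, g i (b i) := by
  rw [← prod_mul_distrib, ← prod_mul_distrib]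
  refine prod_congr rfl fun i _ => ?_
  rcases le_total (a i) (b i) with h | h
  · simp [h]
  · simp [h, mul_comm]

lemma IsUpperSet.monotone_indicator_one {α : Type*} [Preorder α] {s : Set α}
    (hs : IsUpperSet s) : Monotone (s.indicator (1 : α → ℝ)) := by
  intro a b hab
  by_cases ha : a ∈ s
  · simp [ha, hs hab ha]
  · simp [ha, Set.indicator_nonneg]

lemma isUpperSet_setOf_forall_mem_eq_true {I : Type*} (ω : Finset I) :
    IsUpperSet {a : I → Bool | ∀ i ∈ ω, a i = true} :=
  fun _ _ hab ha i hi => le_antisymm (Bool.le_true _) (ha i hi ▸ hab i)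

lemma Real.one_sub_add_le_mul_exp {p δ : ℝ} (hp : p ≤ 1 / 2) (hδ : 0 ≤ δ) :
    1 - p + δ ≤ (1 - p) * Real.exp (2 * δ) := by
  nlinarith [Real.add_one_le_exp (2 * δ)]

namespace ProbabilityTheory

section Harris

variable {Ω ι α : Type*} [MeasurableSpace Ω] {μ : Measure Ω} [Fintype ι]
  [MeasurableSpace α] [MeasurableSingletonClass α] {X : ι → Ω → α}

lemma measureReal_preimage_eq_sum_indicator [DecidableEq ι] [Fintype α] [IsFiniteMeasure μ]
    (hX : ∀ i, Measurable (X i)) (s : Set (ι → α)) :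
    μ.real ((fun x i => X i x) ⁻¹' s) =
      ∑ a, μ.real ((fun x i => X i x) ⁻¹' {a}) * s.indicator 1 a := by
  classical
  have hV : Measurable fun x i => X i x := measurable_pi_lambda _ hX
  rw [← map_measureReal_apply hV s.toFinite.measurableSet, ← s.coe_toFinset,
    ← sum_measureReal_singleton, ← sum_subset (subset_univ _)]
  · refine sum_congr rfl fun a ha => ?_
    rw [map_measureReal_apply hV (measurableSet_singleton a)]
    simp_all
  · intro a _ ha
    simp_all

lemma iIndepFun.measureReal_preimage_singleton_eq_prod (h : iIndepFun X μ) (a : ι → α) :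
    μ.real ((fun x i => X i x) ⁻¹' {a}) = ∏ i, μ.real (X i ⁻¹' {a i}) := by
  have hcell : (fun x i => X i x) ⁻¹' {a} = ⋂ i ∈ (univ : Finset ι), X i ⁻¹' {a i} := by
    ext x
    simp [funext_iff]
  rw [hcell, measureReal_def,
    h.measure_inter_preimage_eq_mul _ fun i _ => measurableSet_singleton _, ENNReal.toReal_prod]
  rfl

/-- The **Harris inequality**. It is `fkg` for the law of `X`, which is log-modular on the
distributive lattice `ι → α` because it is a product measure. -/
theorem iIndepFun.measureReal_preimage_mul_le_inter [DecidableEq ι] [Fintype α] [LinearOrder α]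
    [IsProbabilityMeasure μ] (hX : ∀ i, Measurable (X i)) (h : iIndepFun X μ)
    {A B : Set (ι → α)} (hA : IsUpperSet A) (hB : IsUpperSet B) :
    μ.real ((fun x i => X i x) ⁻¹' A) * μ.real ((fun x i => X i x) ⁻¹' B) ≤
      μ.real ((fun x i => X i x) ⁻¹' (A ∩ B)) := by
  set w : (ι → α) → ℝ := fun a => μ.real ((fun x i => X i x) ⁻¹' {a})
  have hw : ∀ a b, w a * w b ≤ w (a ⊓ b) * w (a ⊔ b) := fun a b => by
    simp only [w, h.measureReal_preimage_singleton_eq_prod]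
    exact (prod_apply_inf_mul_prod_apply_sup (fun i c => μ.real (X i ⁻¹' {c})) a b).ge
  have hw₁ : ∑ a, w a = 1 := by
    simpa using (measureReal_preimage_eq_sum_indicator (μ := μ) hX Set.univ).symm
  have hfkg := fkg (A.indicator 1) (B.indicator 1) w (fun _ => measureReal_nonneg)
    (Set.indicator_nonneg fun _ _ => zero_le_one) (Set.indicator_nonneg fun _ _ => zero_le_one)
    hA.monotone_indicator_one hB.monotone_indicator_one hw
  rw [hw₁, one_mul] at hfkg
  rw [measureReal_preimage_eq_sum_indicator hX, measureReal_preimage_eq_sum_indicator hX,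
    measureReal_preimage_eq_sum_indicator hX, Set.inter_indicator_one]
  exact hfkg

theorem iIndepFun.measureReal_preimage_inter_le_mul [DecidableEq ι] [Fintype α] [LinearOrder α]
    [IsProbabilityMeasure μ] (hX : ∀ i, Measurable (X i)) (h : iIndepFun X μ)
    {A B : Set (ι → α)} (hA : IsUpperSet A) (hB : IsLowerSet B) :
    μ.real ((fun x i => X i x) ⁻¹' (A ∩ B)) ≤
      μ.real ((fun x i => X i x) ⁻¹' A) * μ.real ((fun x i => X i x) ⁻¹' B) := by
  have hB' : MeasurableSet ((fun x i => X i x) ⁻¹' B) :=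
    measurable_pi_lambda _ hX B.toFinite.measurableSet
  have harris := h.measureReal_preimage_mul_le_inter hX hA hB.compl
  have hsplit := measureReal_inter_add_sdiff (μ := μ) (s := (fun x i => X i x) ⁻¹' A) hB'
  rw [Set.preimage_compl, probReal_compl_eq_one_sub hB', Set.preimage_inter, Set.preimage_compl,
    ← Set.sdiff_eq] at harris
  rw [Set.preimage_inter]
  linarith

end Harris

section Janson

variable {Ω I : Type*} {ξ : I → Ω → Bool}

def allOnes (ξ : I → Ω → Bool) (ω : Finset I) : Set Ω := {x | ∀ i ∈ ω, ξ i x = true}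

def avoidAllOnes (ξ : I → Ω → Bool) (S : Finset (Finset I)) : Set Ω :=
  ⋂ ω ∈ S, (allOnes ξ ω)ᶜ

def overlapPairs [DecidableEq I] (S : Finset (Finset I)) : Finset (Finset I × Finset I) :=
  (S ×ˢ S).filter fun p => p.1 ≠ p.2 ∧ (p.1 ∩ p.2).Nonempty

lemma allOnes_eq_preimage (ω : Finset I) :
    allOnes ξ ω = (fun x i => ξ i x) ⁻¹' {a | ∀ i ∈ ω, a i = true} :=
  rfl

lemma avoidAllOnes_eq_preimage (S : Finset (Finset I)) :
    avoidAllOnes ξ S = (fun x i => ξ i x) ⁻¹' ⋂ ω ∈ S, {a | ∀ i ∈ ω, a i = true}ᶜ := by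
  simp only [avoidAllOnes, allOnes_eq_preimage, Set.preimage_iInter₂, Set.preimage_compl]

lemma avoidAllOnes_anti {S T : Finset (Finset I)} (hST : S ⊆ T) :
    avoidAllOnes ξ T ⊆ avoidAllOnes ξ S :=
  Set.biInter_subset_biInter_left fun _ hω => hST hω

lemma avoidAllOnes_insert [DecidableEq I] (ω : Finset I) (S : Finset (Finset I)) :
    avoidAllOnes ξ (insert ω S) = avoidAllOnes ξ S \ allOnes ξ ω := by
  rw [avoidAllOnes, Finset.set_biInter_insert, Set.sdiff_eq, Set.inter_comm]
  rfl

lemma measurableSet_allOnes_iSup {s : Set I} {ω : Finset I} (hω : ↑ω ⊆ s) :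
    MeasurableSet[⨆ i ∈ s, MeasurableSpace.comap (ξ i) inferInstance] (allOnes ξ ω) := by
  have hbiInter : allOnes ξ ω = ⋂ i ∈ ω, ξ i ⁻¹' {true} := by
    ext x
    simp [allOnes]
  rw [hbiInter]
  refine Finset.measurableSet_biInter _ fun i hi => ?_
  exact le_iSup₂ (f := fun i (_ : i ∈ s) => MeasurableSpace.comap (ξ i) inferInstance) i (hω hi)
    _ ⟨{true}, trivial, rfl⟩

lemma measurableSet_avoidAllOnes_iSup {s : Set I} {S : Finset (Finset I)}
    (hS : ∀ ω ∈ S, ↑ω ⊆ s) :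
    MeasurableSet[⨆ i ∈ s, MeasurableSpace.comap (ξ i) inferInstance] (avoidAllOnes ξ S) :=
  Finset.measurableSet_biInter _ fun ω hω => (measurableSet_allOnes_iSup (hS ω hω)).compl

lemma sum_filter_add_sum_overlapPairs_le_sum_overlapPairs_insert [DecidableEq I] {ω : Finset I}
    {S : Finset (Finset I)} (hω : ω ∉ S) {f : Finset I × Finset I → ℝ} (hf : ∀ p, 0 ≤ f p) :
    ∑ ω' ∈ S with (ω ∩ ω').Nonempty, f (ω, ω') + ∑ p ∈ overlapPairs S, f p ≤
      ∑ p ∈ overlapPairs (insert ω S), f p := by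
  have hdisj : Disjoint ({ω} ×ˢ {ω' ∈ S | (ω ∩ ω').Nonempty}) (overlapPairs S) := by
    simp only [disjoint_left, mem_product, mem_singleton, overlapPairs, mem_filter]
    rintro ⟨_, _⟩ ⟨rfl, -⟩ ⟨⟨hS, -⟩, -⟩
    exact hω hS
  have hsub : {ω} ×ˢ {ω' ∈ S | (ω ∩ ω').Nonempty} ∪ overlapPairs S ⊆
      overlapPairs (insert ω S) := by
    refine union_subset ?_ ?_ <;>
      simp only [subset_iff, mem_product, mem_singleton, overlapPairs, mem_filter, mem_insert]
    · rintro ⟨_, ω'⟩ ⟨rfl, hω', hint⟩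
      exact ⟨⟨Or.inl rfl, Or.inr hω'⟩, fun heq => hω (heq ▸ hω'), hint⟩
    · rintro ⟨_, _⟩ ⟨⟨h₁, h₂⟩, hne⟩
      exact ⟨⟨Or.inr h₁, Or.inr h₂⟩, hne⟩
  calc ∑ ω' ∈ S with (ω ∩ ω').Nonempty, f (ω, ω') + ∑ p ∈ overlapPairs S, f p
      = ∑ p ∈ {ω} ×ˢ {ω' ∈ S | (ω ∩ ω').Nonempty} ∪ overlapPairs S, f p := by
        rw [sum_union hdisj, sum_product, sum_singleton]
    _ ≤ ∑ p ∈ overlapPairs (insert ω S), f p :=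
        sum_le_sum_of_subset_of_nonneg hsub fun p _ _ => hf p

variable [MeasurableSpace Ω] {μ : Measure Ω}

lemma measurableSet_allOnes (hξ : ∀ i, Measurable (ξ i)) (ω : Finset I) :
    MeasurableSet (allOnes ξ ω) :=
  iSup₂_le (fun i _ => (hξ i).comap_le) _ (measurableSet_allOnes_iSup (Set.subset_univ _))

lemma iIndepFun.measureReal_allOnes_inter_avoidAllOnes (hξ : ∀ i, Measurable (ξ i))
    (h : iIndepFun ξ μ) {ω : Finset I} {T : Finset (Finset I)}
    (hT : ∀ ω' ∈ T, Disjoint ω ω') :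
    μ.real (allOnes ξ ω ∩ avoidAllOnes ξ T) =
      μ.real (allOnes ξ ω) * μ.real (avoidAllOnes ξ T) := by
  have hind := indep_iSup_of_disjoint (fun i => (hξ i).comap_le)
    ((iIndepFun_iff_iIndep _ _ _).1 h) (disjoint_compl_right (a := (ω : Set I)))
  rw [measureReal_def, (Indep_iff _ _ _).1 hind _ _ (measurableSet_allOnes_iSup subset_rfl)
    (measurableSet_avoidAllOnes_iSup fun ω' hω' => Set.subset_compl_iff_disjoint_left.2 ?_),
    ENNReal.toReal_mul]
  · rfl
  · exact Finset.disjoint_coe.2 (hT ω' hω')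

lemma iIndepFun.measureReal_allOnes_inter_allOnes_inter_avoidAllOnes_le [Fintype I]
    [DecidableEq I] [IsProbabilityMeasure μ] (hξ : ∀ i, Measurable (ξ i)) (h : iIndepFun ξ μ)
    (ω ω' : Finset I) (T : Finset (Finset I)) :
    μ.real (allOnes ξ ω ∩ allOnes ξ ω' ∩ avoidAllOnes ξ T) ≤
      μ.real (allOnes ξ ω ∩ allOnes ξ ω') * μ.real (avoidAllOnes ξ T) := by
  have hup := (isUpperSet_setOf_forall_mem_eq_true ω).inter
    (isUpperSet_setOf_forall_mem_eq_true ω')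
  have hlow : IsLowerSet (⋂ ω'' ∈ T, {a : I → Bool | ∀ i ∈ ω'', a i = true}ᶜ) :=
    isLowerSet_iInter₂ fun ω'' _ => (isUpperSet_setOf_forall_mem_eq_true ω'').compl
  simpa only [allOnes_eq_preimage, avoidAllOnes_eq_preimage, Set.preimage_inter]
    using h.measureReal_preimage_inter_le_mul hξ hup hlow

lemma iIndepFun.measureReal_avoidAllOnes_mul_sub_le [Fintype I] [DecidableEq I]
    [IsProbabilityMeasure μ] (hξ : ∀ i, Measurable (ξ i)) (h : iIndepFun ξ μ)
    (ω : Finset I) (S : Finset (Finset I)) :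
    μ.real (avoidAllOnes ξ S) * (μ.real (allOnes ξ ω) -
        ∑ ω' ∈ S with (ω ∩ ω').Nonempty, μ.real (allOnes ξ ω ∩ allOnes ξ ω')) ≤
      μ.real (allOnes ξ ω ∩ avoidAllOnes ξ S) := by
  set J₁ := {ω' ∈ S | (ω ∩ ω').Nonempty}
  set J₀ := {ω' ∈ S | ¬(ω ∩ ω').Nonempty}
  set δ := ∑ ω' ∈ J₁, μ.real (allOnes ξ ω ∩ allOnes ξ ω')
  have hcover : allOnes ξ ω ∩ avoidAllOnes ξ J₀ ⊆ (allOnes ξ ω ∩ avoidAllOnes ξ S) ∪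
      ⋃ ω' ∈ J₁, allOnes ξ ω ∩ allOnes ξ ω' ∩ avoidAllOnes ξ J₀ := by
    rintro x ⟨hxω, hx₀⟩
    by_cases hxS : x ∈ avoidAllOnes ξ S
    · exact Or.inl ⟨hxω, hxS⟩
    obtain ⟨ω', hω'S, hxω'⟩ : ∃ ω' ∈ S, x ∈ allOnes ξ ω' := by
      simpa [avoidAllOnes] using hxS
    have hω'J₁ : ω' ∈ J₁ := mem_filter.2 ⟨hω'S, by_contra fun hdisj =>
      Set.mem_iInter₂.1 hx₀ ω' (mem_filter.2 ⟨hω'S, hdisj⟩) hxω'⟩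
    exact Or.inr (Set.mem_biUnion hω'J₁ ⟨⟨hxω, hxω'⟩, hx₀⟩)
  have hprod : μ.real (allOnes ξ ω ∩ avoidAllOnes ξ J₀) =
      μ.real (allOnes ξ ω) * μ.real (avoidAllOnes ξ J₀) :=
    h.measureReal_allOnes_inter_avoidAllOnes hξ fun ω' hω' => disjoint_iff_inter_eq_empty.2 <|
      not_nonempty_iff_eq_empty.1 (mem_filter.1 hω').2
  have hunion : μ.real (⋃ ω' ∈ J₁, allOnes ξ ω ∩ allOnes ξ ω' ∩ avoidAllOnes ξ J₀) ≤
      δ * μ.real (avoidAllOnes ξ J₀) := by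
    rw [sum_mul]
    exact (measureReal_biUnion_finset_le _ _).trans <| sum_le_sum fun ω' _ =>
      h.measureReal_allOnes_inter_allOnes_inter_avoidAllOnes_le hξ ω ω' J₀
  have hJ₀ : μ.real (avoidAllOnes ξ J₀) * (μ.real (allOnes ξ ω) - δ) ≤
      μ.real (allOnes ξ ω ∩ avoidAllOnes ξ S) := by
    have := (measureReal_mono (μ := μ) hcover).trans (measureReal_union_le _ _)
    linarith
  rcases le_total δ (μ.real (allOnes ξ ω)) with hδ | hδ
  · exact (mul_le_mul_of_nonneg_right (measureReal_mono (avoidAllOnes_anti (filter_subset _ _)))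
      (sub_nonneg.2 hδ)).trans hJ₀
  · exact (mul_nonpos_of_nonneg_of_nonpos measureReal_nonneg (sub_nonpos.2 hδ)).trans
      measureReal_nonneg

lemma iIndepFun.measureReal_avoidAllOnes_insert_le [Fintype I] [DecidableEq I]
    [IsProbabilityMeasure μ] (hξ : ∀ i, Measurable (ξ i)) (h : iIndepFun ξ μ)
    {ω : Finset I} (hω : μ.real (allOnes ξ ω) ≤ 1 / 2) (S : Finset (Finset I)) :
    μ.real (avoidAllOnes ξ (insert ω S)) ≤ μ.real (allOnes ξ ω)ᶜ *
      Real.exp (2 * ∑ ω' ∈ S with (ω ∩ ω').Nonempty, μ.real (allOnes ξ ω ∩ allOnes ξ ω')) *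
      μ.real (avoidAllOnes ξ S) := by
  set δ := ∑ ω' ∈ S with (ω ∩ ω').Nonempty, μ.real (allOnes ξ ω ∩ allOnes ξ ω')
  have hsplit := measureReal_inter_add_sdiff (μ := μ) (s := avoidAllOnes ξ S)
    (measurableSet_allOnes hξ ω)
  rw [Set.inter_comm] at hsplit
  have hlower := h.measureReal_avoidAllOnes_mul_sub_le hξ ω S
  rw [avoidAllOnes_insert, probReal_compl_eq_one_sub (measurableSet_allOnes hξ ω)]
  calc μ.real (avoidAllOnes ξ S \ allOnes ξ ω)
      ≤ μ.real (avoidAllOnes ξ S) * (1 - μ.real (allOnes ξ ω) + δ) := by linarith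
    _ ≤ μ.real (avoidAllOnes ξ S) * ((1 - μ.real (allOnes ξ ω)) * Real.exp (2 * δ)) :=
        mul_le_mul_of_nonneg_left
          (Real.one_sub_add_le_mul_exp hω (sum_nonneg fun _ _ => measureReal_nonneg))
          measureReal_nonneg
    _ = _ := by ring

theorem iIndepFun.measureReal_avoidAllOnes_le_prod_mul_exp [Fintype I] [DecidableEq I]
    [IsProbabilityMeasure μ] (hξ : ∀ i, Measurable (ξ i)) (h : iIndepFun ξ μ)
    (S : Finset (Finset I)) (hS : ∀ ω ∈ S, μ.real (allOnes ξ ω) ≤ 1 / 2) :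
    μ.real (avoidAllOnes ξ S) ≤ (∏ ω ∈ S, μ.real (allOnes ξ ω)ᶜ) *
      Real.exp (2 * ∑ p ∈ overlapPairs S, μ.real (allOnes ξ p.1 ∩ allOnes ξ p.2)) := by
  induction S using Finset.induction_on with
  | empty => simp [avoidAllOnes, overlapPairs]
  | @insert ω S hω ih =>
    set δ := ∑ ω' ∈ S with (ω ∩ ω').Nonempty, μ.real (allOnes ξ ω ∩ allOnes ξ ω')
    calc μ.real (avoidAllOnes ξ (insert ω S))
        ≤ μ.real (allOnes ξ ω)ᶜ * Real.exp (2 * δ) * μ.real (avoidAllOnes ξ S) :=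
          h.measureReal_avoidAllOnes_insert_le hξ (hS ω (mem_insert_self ω S)) S
      _ ≤ μ.real (allOnes ξ ω)ᶜ * Real.exp (2 * δ) * ((∏ ω ∈ S, μ.real (allOnes ξ ω)ᶜ) *
          Real.exp (2 * ∑ p ∈ overlapPairs S, μ.real (allOnes ξ p.1 ∩ allOnes ξ p.2))) := by
          gcongr
          exact ih fun ω' hω' => hS ω' (mem_insert_of_mem hω')
      _ = (∏ ω ∈ insert ω S, μ.real (allOnes ξ ω)ᶜ) * Real.exp (2 * (δ +
          ∑ p ∈ overlapPairs S, μ.real (allOnes ξ p.1 ∩ allOnes ξ p.2))) := by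
          rw [prod_insert hω, mul_add, Real.exp_add]
          ring
      _ ≤ _ := by
          gcongr
          exact sum_filter_add_sum_overlapPairs_le_sum_overlapPairs_insert hω
            (f := fun p => μ.real (allOnes ξ p.1 ∩ allOnes ξ p.2)) fun _ => measureReal_nonneg

end Janson

end ProbabilityTheory

theorem stmt_8_general (I : Type*) [Fintype I] [DecidableEq I]
    (Ω : Type*) [MeasureSpace Ω] [IsProbabilityMeasure (ℙ : Measure Ω)]
    (ξ : I → Ω → Bool) (hmeas : ∀ i, Measurable (ξ i))
    (hindep : iIndepFun ξ ℙ)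
    (S : Finset (Finset I))
    (hhalf : ∀ ω ∈ S, (ℙ {x | ∀ i ∈ ω, ξ i x = true}).toReal ≤ 1 / 2) :
    (ℙ (⋂ ω ∈ S, {x | ∀ i ∈ ω, ξ i x = true}ᶜ)).toReal ≤
      (∏ ω ∈ S, (ℙ ({x | ∀ i ∈ ω, ξ i x = true}ᶜ)).toReal) *
        Real.exp (2 * ∑ p ∈ (S ×ˢ S).filter
            (fun p : Finset I × Finset I => p.1 ≠ p.2 ∧ (p.1 ∩ p.2).Nonempty),
          (ℙ ({x | ∀ i ∈ p.1, ξ i x = true} ∩ {x | ∀ i ∈ p.2, ξ i x = true})).toReal) :=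
  hindep.measureReal_avoidAllOnes_le_prod_mul_exp hmeas S hhalf

/-- Janson's second correlation inequality: if `(ξ_i)_{i ∈ I}` are independent `{0,1}`-valued
random variables, `S` is a finite family of nonempty subsets of `I`, `E_ω = {ξ_i = 1, ∀ i ∈ ω}`
and `P(E_ω) ≤ 1/2` for each `ω ∈ S`, then
`P(⋂_{ω ∈ S} E_ωᶜ) ≤ (∏_{ω ∈ S} P(E_ωᶜ)) · exp(2 Σ P(E_ω ∩ E_ω'))`, the sum being over
ordered pairs `ω ≠ ω'` in `S` with `ω ∩ ω' ≠ ∅`. -/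
theorem stmt_8 (I : Type*) [Fintype I] [DecidableEq I]
    (Ω : Type*) [MeasureSpace Ω] [IsProbabilityMeasure (ℙ : Measure Ω)]
    (ξ : I → Ω → Bool) (hmeas : ∀ i, Measurable (ξ i))
    (hindep : iIndepFun ξ ℙ)
    (S : Finset (Finset I)) (hne : ∀ ω ∈ S, ω.Nonempty)
    (hhalf : ∀ ω ∈ S, (ℙ {x | ∀ i ∈ ω, ξ i x = true}).toReal ≤ 1 / 2) :
    (ℙ (⋂ ω ∈ S, {x | ∀ i ∈ ω, ξ i x = true}ᶜ)).toReal ≤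
      (∏ ω ∈ S, (ℙ ({x | ∀ i ∈ ω, ξ i x = true}ᶜ)).toReal) *
        Real.exp (2 * ∑ p ∈ (S ×ˢ S).filter
            (fun p : Finset I × Finset I => p.1 ≠ p.2 ∧ (p.1 ∩ p.2).Nonempty),
          (ℙ ({x | ∀ i ∈ p.1, ξ i x = true} ∩ {x | ∀ i ∈ p.2, ξ i x = true})).toReal) :=
  stmt_8_general I Ω ξ hmeas hindep S hhalf
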